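/- arXiv:2002.07944 — 8 statements merged into one kernel-verified Lean document; each statement's English description precedes it below -/
import Mathlib

section
/- The distributive λ-calculus is confluent: if s₁ *← t →* s₂ then there exists u with s₁ →* u *← s₂. -/
inductive Tm : Type
| var : ℕ → Tm
| lam : Tm → Tm
| app : Tm → Tm → Tm
| pair : Tm → Tm → Tm
| p1 : Tm → Tm
| p2 : Tm → Tm

namespace Tm

/-- Renaming of de Bruijn indices. -/
def rename (f : ℕ → ℕ) : Tm → Tm
| var n => var (f n)
| lam t => lam (t.rename (fun n => match n with | 0 => 0 | n+1 => f n + 1))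
| app t s => app (t.rename f) (s.rename f)
| pair t s => pair (t.rename f) (s.rename f)
| p1 t => p1 (t.rename f)
| p2 t => p2 (t.rename f)

/-- Capture-avoiding simultaneous substitution. -/
def subst (σ : ℕ → Tm) : Tm → Tm
| var n => σ n
| lam t => lam (t.subst (fun n => match n with | 0 => var 0 | n+1 => (σ n).rename Nat.succ))
| app t s => app (t.subst σ) (s.subst σ)
| pair t s => pair (t.subst σ) (s.subst σ)
| p1 t => p1 (t.subst σ)
| p2 t => p2 (t.subst σ)

/-- Substitution of the single (outermost) free variable: t[x := s]. -/
def subst1 (t s : Tm) : Tm :=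
  t.subst (fun n => match n with | 0 => s | n+1 => var n)

/-- One-step reduction of the distributive λ-calculus. -/
inductive Step : Tm → Tm → Prop
| beta (t s) : Step (app (lam t) s) (t.subst1 s)
| proj1 (t1 t2) : Step (p1 (pair t1 t2)) t1
| proj2 (t1 t2) : Step (p2 (pair t1 t2)) t2
| pairApp (t s u) : Step (app (pair t s) u) (pair (app t u) (app s u))
| projLam1 (t) : Step (p1 (lam t)) (lam (p1 t))
| projLam2 (t) : Step (p2 (lam t)) (lam (p2 t))
| lam_cong {t t'} : Step t t' → Step (lam t) (lam t')
| appL {t t' s} : Step t t' → Step (app t s) (app t' s)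
| appR {t s s'} : Step s s' → Step (app t s) (app t s')
| pairL {t t' s} : Step t t' → Step (pair t s) (pair t' s)
| pairR {t s s'} : Step s s' → Step (pair t s) (pair t s')
| p1_cong {t t'} : Step t t' → Step (p1 t) (p1 t')
| p2_cong {t t'} : Step t t' → Step (p2 t) (p2 t')

/-- Many-step reduction. -/
def Steps : Tm → Tm → Prop := Relation.ReflTransGen Step

/-- A term is normal when no rule applies anywhere in it. -/
def Normal (t : Tm) : Prop := ¬ ∃ s, Step t s

/-- All free variables are < k. -/
def closedUnder : ℕ → Tm → Prop
| k, var n => n < k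
| k, lam t => closedUnder (k+1) t
| k, app t s => closedUnder k t ∧ closedUnder k s
| k, pair t s => closedUnder k t ∧ closedUnder k s
| k, p1 t => closedUnder k t
| k, p2 t => closedUnder k t

def Closed (t : Tm) : Prop := closedUnder 0 t

/-- Values: variables, abstractions, pairs. -/
def IsValue : Tm → Prop
| var _ => True
| lam _ => True
| pair _ _ => True
| _ => False

/-- Neutral terms: variables, applications, projections. -/
def Neutral : Tm → Prop
| var _ => True
| app _ _ => True
| p1 _ => True
| p2 _ => True
| _ => False

/-- Strong normalization: every reduction sequence is finite. -/
def SN (t : Tm) : Prop := Acc (fun a b => Step b a) t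

end Tm

inductive Ty : Type
| base : Ty
| arr : Ty → Ty → Ty
| conj : Ty → Ty → Ty

/-- The least congruence containing distributivity A ⇒ (B ∧ C) ≡ (A ⇒ B) ∧ (A ⇒ C). -/
inductive Iso : Ty → Ty → Prop
| refl (A) : Iso A A
| symm {A B} : Iso A B → Iso B A
| trans {A B C} : Iso A B → Iso B C → Iso A C
| distr (A B C) : Iso (Ty.arr A (Ty.conj B C)) (Ty.conj (Ty.arr A B) (Ty.arr A C))
| arrL {A C} (B) : Iso A C → Iso (Ty.arr A B) (Ty.arr C B)
| arrR {B C} (A) : Iso B C → Iso (Ty.arr A B) (Ty.arr A C)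
| conjL {A C} (B) : Iso A C → Iso (Ty.conj A B) (Ty.conj C B)
| conjR {B C} (A) : Iso B C → Iso (Ty.conj A B) (Ty.conj A C)

/-- Typing, with contexts as lists of types (de Bruijn), including the conversion rule for ≡. -/
inductive Typing : List Ty → Tm → Ty → Prop
| var {Γ n A} : Γ[n]? = some A → Typing Γ (Tm.var n) A
| lam {Γ t A B} : Typing (A :: Γ) t B → Typing Γ (Tm.lam t) (Ty.arr A B)
| app {Γ t s A B} : Typing Γ t (Ty.arr A B) → Typing Γ s A → Typing Γ (Tm.app t s) B
| pair {Γ t s A B} : Typing Γ t A → Typing Γ s B → Typing Γ (Tm.pair t s) (Ty.conj A B)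
| p1 {Γ t A B} : Typing Γ t (Ty.conj A B) → Typing Γ (Tm.p1 t) A
| p2 {Γ t A B} : Typing Γ t (Ty.conj A B) → Typing Γ (Tm.p2 t) B
| iso {Γ t A B} : Typing Γ t A → Iso A B → Typing Γ t B

/-- Reducibility interpretation of types. -/
def Red : Ty → Tm → Prop
| Ty.base, t => Tm.SN t
| Ty.arr A B, t => ∀ s, Red A s → Red B (Tm.app t s)
| Ty.conj A B, t => Red A (Tm.p1 t) ∧ Red B (Tm.p2 t)

/-!
Parallel reduction `Par` contracts any set of redexes of a term at once. It is stable under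
substitution, and every parallel step `t ⇒ u` can be completed to the complete development
`dev t`, i.e. `u ⇒ dev t` (Takahashi's triangle); hence `Par` has the diamond property. Since
`Step ⊆ Par ⊆ Steps`, the reflexive-transitive closure of `Par` is `Steps`, and confluence follows
from the diamond property by the Church–Rosser argument.
-/

namespace Tm

def upRen (f : ℕ → ℕ) : ℕ → ℕ
  | 0 => 0
  | n + 1 => f n + 1

def up (σ : ℕ → Tm) : ℕ → Tm
  | 0 => var 0
  | n + 1 => (σ n).rename Nat.succ

theorem rename_lam (f : ℕ → ℕ) (t : Tm) : rename f (lam t) = lam (rename (upRen f) t) := rfl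

theorem subst_lam (σ : ℕ → Tm) (t : Tm) : subst σ (lam t) = lam (subst (up σ) t) := rfl

theorem upRen_comp (f g : ℕ → ℕ) : upRen g ∘ upRen f = upRen (g ∘ f) := by
  funext n; cases n <;> rfl

theorem rename_rename (f g : ℕ → ℕ) (t : Tm) : rename g (rename f t) = rename (g ∘ f) t := by
  induction t generalizing f g with
  | lam t ih => simp only [rename_lam, ih, upRen_comp]
  | _ => simp_all [rename]

theorem up_comp_upRen (σ : ℕ → Tm) (f : ℕ → ℕ) : up σ ∘ upRen f = up (σ ∘ f) := by
  funext n; cases n <;> rfl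

theorem subst_rename (σ : ℕ → Tm) (f : ℕ → ℕ) (t : Tm) :
    subst σ (rename f t) = subst (σ ∘ f) t := by
  induction t generalizing f σ with
  | lam t ih => simp only [rename_lam, subst_lam, ih, up_comp_upRen]
  | _ => simp_all [rename, subst]

theorem rename_comp_up (f : ℕ → ℕ) (σ : ℕ → Tm) :
    rename (upRen f) ∘ up σ = up (rename f ∘ σ) := by
  funext n
  cases n with
  | zero => rfl
  | succ n => exact (rename_rename _ _ _).trans (rename_rename f Nat.succ (σ n)).symm

theorem rename_subst (f : ℕ → ℕ) (σ : ℕ → Tm) (t : Tm) :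
    rename f (subst σ t) = subst (rename f ∘ σ) t := by
  induction t generalizing f σ with
  | lam t ih => simp only [rename_lam, subst_lam, ih, rename_comp_up]
  | _ => simp_all [rename, subst]

theorem subst_comp_up (σ τ : ℕ → Tm) : subst (up τ) ∘ up σ = up (subst τ ∘ σ) := by
  funext n
  cases n with
  | zero => rfl
  | succ n => exact (subst_rename _ _ _).trans (rename_subst Nat.succ τ (σ n)).symm

theorem subst_subst (σ τ : ℕ → Tm) (t : Tm) : subst τ (subst σ t) = subst (subst τ ∘ σ) t := by
  induction t generalizing σ τ with
  | lam t ih => simp only [subst_lam, ih, subst_comp_up]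
  | _ => simp_all [subst]

theorem up_var : up var = var := by
  funext n; cases n <;> rfl

theorem subst_var (t : Tm) : subst var t = t := by
  induction t with
  | lam t ih => rw [subst_lam, up_var, ih]
  | _ => simp_all [subst]

theorem rename_subst1 (f : ℕ → ℕ) (t s : Tm) :
    rename f (subst1 t s) = subst1 (rename (upRen f) t) (rename f s) := by
  simp only [subst1, rename_subst, subst_rename]
  congr 1; funext n; cases n <;> rfl

theorem subst_subst1 (σ : ℕ → Tm) (t s : Tm) :
    subst σ (subst1 t s) = subst1 (subst (up σ) t) (subst σ s) := by
  simp only [subst1, subst_subst]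
  congr 1; funext n
  cases n with
  | zero => rfl
  | succ n => rw [Function.comp_apply, Function.comp_apply, up, subst_rename]; exact (subst_var _).symm

inductive Par : Tm → Tm → Prop
| var (n) : Par (var n) (var n)
| lam {t t'} : Par t t' → Par (lam t) (lam t')
| app {t t' s s'} : Par t t' → Par s s' → Par (app t s) (app t' s')
| pair {t t' s s'} : Par t t' → Par s s' → Par (pair t s) (pair t' s')
| p1 {t t'} : Par t t' → Par (p1 t) (p1 t')
| p2 {t t'} : Par t t' → Par (p2 t) (p2 t')
| beta {t t' s s'} : Par t t' → Par s s' → Par (app (lam t) s) (t'.subst1 s')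
| proj1 {a a' b b'} : Par a a' → Par b b' → Par (p1 (pair a b)) a'
| proj2 {a a' b b'} : Par a a' → Par b b' → Par (p2 (pair a b)) b'
| distr {a a' b b' u u'} : Par a a' → Par b b' → Par u u' →
    Par (app (pair a b) u) (pair (app a' u') (app b' u'))
| plam1 {t t'} : Par t t' → Par (p1 (lam t)) (lam (p1 t'))
| plam2 {t t'} : Par t t' → Par (p2 (lam t)) (lam (p2 t'))

protected theorem Par.refl (t : Tm) : Par t t := by
  induction t with
  | var n => exact .var n
  | lam _ ih => exact .lam ih
  | app _ _ iht ihs => exact .app iht ihs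
  | pair _ _ iht ihs => exact .pair iht ihs
  | p1 _ ih => exact .p1 ih
  | p2 _ ih => exact .p2 ih

theorem Par.rename {t t' : Tm} (f : ℕ → ℕ) (h : Par t t') :
    Par (t.rename f) (t'.rename f) := by
  induction h generalizing f with
  | var n => exact .var _
  | lam _ ih => exact .lam (ih _)
  | app _ _ iht ihs => exact .app (iht f) (ihs f)
  | pair _ _ iht ihs => exact .pair (iht f) (ihs f)
  | p1 _ ih => exact .p1 (ih f)
  | p2 _ ih => exact .p2 (ih f)
  | beta _ _ iht ihs => rw [rename_subst1]; exact .beta (iht _) (ihs f)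
  | proj1 _ _ iha ihb => exact .proj1 (iha f) (ihb f)
  | proj2 _ _ iha ihb => exact .proj2 (iha f) (ihb f)
  | distr _ _ _ iha ihb ihu => exact .distr (iha f) (ihb f) (ihu f)
  | plam1 _ ih => exact .plam1 (ih _)
  | plam2 _ ih => exact .plam2 (ih _)

theorem Par.up {σ σ' : ℕ → Tm} (hσ : ∀ n, Par (σ n) (σ' n)) (n : ℕ) :
    Par (up σ n) (up σ' n) := by
  cases n with
  | zero => exact .var 0
  | succ n => exact (hσ n).rename Nat.succ

theorem Par.subst {t t' : Tm} {σ σ' : ℕ → Tm} (hσ : ∀ n, Par (σ n) (σ' n))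
    (h : Par t t') : Par (t.subst σ) (t'.subst σ') := by
  induction h generalizing σ σ' with
  | var n => exact hσ n
  | lam _ ih => exact .lam (ih (Par.up hσ))
  | app _ _ iht ihs => exact .app (iht hσ) (ihs hσ)
  | pair _ _ iht ihs => exact .pair (iht hσ) (ihs hσ)
  | p1 _ ih => exact .p1 (ih hσ)
  | p2 _ ih => exact .p2 (ih hσ)
  | beta _ _ iht ihs => rw [subst_subst1]; exact .beta (iht (Par.up hσ)) (ihs hσ)
  | proj1 _ _ iha ihb => exact .proj1 (iha hσ) (ihb hσ)
  | proj2 _ _ iha ihb => exact .proj2 (iha hσ) (ihb hσ)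
  | distr _ _ _ iha ihb ihu => exact .distr (iha hσ) (ihb hσ) (ihu hσ)
  | plam1 _ ih => exact .plam1 (ih (Par.up hσ))
  | plam2 _ ih => exact .plam2 (ih (Par.up hσ))

theorem Par.subst1 {t t' s s' : Tm} (ht : Par t t') (hs : Par s s') :
    Par (t.subst1 s) (t'.subst1 s') :=
  ht.subst fun n => by
    cases n with
    | zero => exact hs
    | succ n => exact .var n

def dev : Tm → Tm
| var n => var n
| lam t => lam (dev t)
| pair t s => pair (dev t) (dev s)
| app t s =>
  match t with
  | lam t0 => (dev t0).subst1 (dev s)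
  | pair a b => pair (app (dev a) (dev s)) (app (dev b) (dev s))
  | t => app (dev t) (dev s)
| p1 t =>
  match t with
  | pair a _ => dev a
  | lam t0 => lam (p1 (dev t0))
  | t => p1 (dev t)
| p2 t =>
  match t with
  | pair _ b => dev b
  | lam t0 => lam (p2 (dev t0))
  | t => p2 (dev t)

theorem par_app_dev {t t' s s' : Tm} (ht : Par t t') (ht' : Par t' (dev t))
    (hs' : Par s' (dev s)) : Par (app t' s') (dev (app t s)) := by
  cases t with
  | lam => cases ht; cases ht' with | lam h => exact .beta h hs'
  | pair => cases ht; cases ht' with | pair ha hb => exact .distr ha hb hs'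
  | _ => exact .app ht' hs'

theorem par_p1_dev {t t' : Tm} (ht : Par t t') (ht' : Par t' (dev t)) :
    Par (p1 t') (dev (p1 t)) := by
  cases t with
  | lam => cases ht; cases ht' with | lam h => exact .plam1 h
  | pair => cases ht; cases ht' with | pair ha hb => exact .proj1 ha hb
  | _ => exact .p1 ht'

theorem par_p2_dev {t t' : Tm} (ht : Par t t') (ht' : Par t' (dev t)) :
    Par (p2 t') (dev (p2 t)) := by
  cases t with
  | lam => cases ht; cases ht' with | lam h => exact .plam2 h
  | pair => cases ht; cases ht' with | pair ha hb => exact .proj2 ha hb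
  | _ => exact .p2 ht'

theorem par_dev_of_par {t u : Tm} (h : Par t u) : Par u (dev t) := by
  induction h with
  | var n => exact .var n
  | lam _ ih => exact .lam ih
  | app ht _ iht ihs => exact par_app_dev ht iht ihs
  | pair _ _ iht ihs => exact .pair iht ihs
  | p1 ht ih => exact par_p1_dev ht ih
  | p2 ht ih => exact par_p2_dev ht ih
  | beta _ _ iht ihs => exact iht.subst1 ihs
  | proj1 _ _ iha _ => exact iha
  | proj2 _ _ _ ihb => exact ihb
  | distr _ _ _ iha ihb ihu => exact .pair (.app iha ihu) (.app ihb ihu)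
  | plam1 _ ih => exact .lam (.p1 ih)
  | plam2 _ ih => exact .lam (.p2 ih)

theorem Step.par {t u : Tm} (h : Step t u) : Par t u := by
  induction h with
  | beta t s => exact .beta (.refl t) (.refl s)
  | proj1 a b => exact .proj1 (.refl a) (.refl b)
  | proj2 a b => exact .proj2 (.refl a) (.refl b)
  | pairApp a b u => exact .distr (.refl a) (.refl b) (.refl u)
  | projLam1 t => exact .plam1 (.refl t)
  | projLam2 t => exact .plam2 (.refl t)
  | lam_cong _ ih => exact .lam ih
  | appL _ ih => exact .app ih (.refl _)
  | appR _ ih => exact .app (.refl _) ih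
  | pairL _ ih => exact .pair ih (.refl _)
  | pairR _ ih => exact .pair (.refl _) ih
  | p1_cong _ ih => exact .p1 ih
  | p2_cong _ ih => exact .p2 ih

namespace Steps

open Relation

theorem lam {t t' : Tm} (h : Steps t t') : Steps (lam t) (lam t') :=
  ReflTransGen.lift Tm.lam (fun _ _ => Step.lam_cong) _ _ h

theorem app {t t' s s' : Tm} (ht : Steps t t') (hs : Steps s s') :
    Steps (app t s) (app t' s') :=
  (ReflTransGen.lift (Tm.app · s) (fun _ _ => Step.appL) _ _ ht).trans
    (ReflTransGen.lift (Tm.app t' ·) (fun _ _ => Step.appR) _ _ hs)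

theorem pair {t t' s s' : Tm} (ht : Steps t t') (hs : Steps s s') :
    Steps (pair t s) (pair t' s') :=
  (ReflTransGen.lift (Tm.pair · s) (fun _ _ => Step.pairL) _ _ ht).trans
    (ReflTransGen.lift (Tm.pair t' ·) (fun _ _ => Step.pairR) _ _ hs)

theorem p1 {t t' : Tm} (h : Steps t t') : Steps (p1 t) (p1 t') :=
  ReflTransGen.lift Tm.p1 (fun _ _ => Step.p1_cong) _ _ h

theorem p2 {t t' : Tm} (h : Steps t t') : Steps (p2 t) (p2 t') :=
  ReflTransGen.lift Tm.p2 (fun _ _ => Step.p2_cong) _ _ h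

end Steps

theorem Par.steps {t u : Tm} (h : Par t u) : Steps t u := by
  induction h with
  | var n => exact .refl
  | lam _ ih => exact ih.lam
  | app _ _ iht ihs => exact iht.app ihs
  | pair _ _ iht ihs => exact iht.pair ihs
  | p1 _ ih => exact ih.p1
  | p2 _ ih => exact ih.p2
  | beta _ _ iht ihs => exact (iht.lam.app ihs).tail (.beta _ _)
  | proj1 _ _ iha ihb => exact (iha.pair ihb).p1.tail (.proj1 _ _)
  | proj2 _ _ iha ihb => exact (iha.pair ihb).p2.tail (.proj2 _ _)
  | distr _ _ _ iha ihb ihu => exact ((iha.pair ihb).app ihu).tail (.pairApp _ _ _)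
  | plam1 _ ih => exact ih.lam.p1.tail (.projLam1 _)
  | plam2 _ ih => exact ih.lam.p2.tail (.projLam2 _)

theorem reflTransGen_par : Relation.ReflTransGen Par = Steps :=
  le_antisymm (Relation.reflTransGen_closed fun _ _ => Par.steps)
    (Relation.ReflTransGen.mono fun _ _ => Step.par)

end Tm

theorem confluence (t s₁ s₂ : Tm) (h1 : Tm.Steps t s₁) (h2 : Tm.Steps t s₂) :
    ∃ u, Tm.Steps s₁ u ∧ Tm.Steps s₂ u := by
  rw [← Tm.reflTransGen_par] at h1 h2 ⊢
  exact Relation.church_rosser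
    (fun t _ _ h₁ h₂ => ⟨t.dev, .single (Tm.par_dev_of_par h₁), .single (Tm.par_dev_of_par h₂)⟩)
    h1 h2
end

section
/- Generation for abstractions: if Γ ⊢ λx.s : A in the simply typed distributive λ-calculus with typing up to the distributivity isomorphism, then there exist types B, C with Γ, x:B ⊢ s : C and B ⇒ C ≡ A. -/
theorem generation_lam (Γ : List Ty) (s : Tm) (A : Ty) (h : Typing Γ (Tm.lam s) A) :
    ∃ B C, Typing (B :: Γ) s C ∧ Iso (Ty.arr B C) A := by
  generalize ht : Tm.lam s = t at h
  induction h with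
  | lam hs => cases ht; exact ⟨_, _, hs, .refl _⟩
  | iso _ hAB ih =>
    obtain ⟨B, C, hs, hiso⟩ := ih ht
    exact ⟨B, C, hs, hiso.trans hAB⟩
  | _ => cases ht
end

section
/- Generation for applications: if Γ ⊢ s u : A in the simply typed distributive λ-calculus with typing up to distributivity, then there exists a type B with Γ ⊢ s : B ⇒ A and Γ ⊢ u : B. -/
theorem generation_app (Γ : List Ty) (s u : Tm) (A : Ty) (h : Typing Γ (Tm.app s u) A) :
    ∃ B, Typing Γ s (Ty.arr B A) ∧ Typing Γ u B := by
  generalize hsu : Tm.app s u = t at h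
  induction h generalizing s u with
  | app hs hu => cases hsu; exact ⟨_, hs, hu⟩
  | iso _ hAA' ih =>
    obtain ⟨B, hs, hu⟩ := ih s u hsu
    exact ⟨B, hs.iso (Iso.arrR B hAA'), hu⟩
  | _ => cases hsu
end

section
/- Generation for projections: if Γ ⊢ πᵢ s : A (i=1,2) in the simply typed distributive λ-calculus with typing up to distributivity, then there exist types B₁, B₂ with Γ ⊢ s : B₁ ∧ B₂ and Bᵢ = A. -/
theorem Typing.p1_inv {Γ : List Ty} {s : Tm} {A : Ty} (h : Typing Γ (Tm.p1 s) A) :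
    ∃ B, Typing Γ s (Ty.conj A B) := by
  generalize ht : Tm.p1 s = t at h
  induction h with
  | p1 hs => cases ht; exact ⟨_, hs⟩
  | iso _ hA ih =>
    obtain ⟨B, hs⟩ := ih ht
    exact ⟨B, hs.iso (Iso.conjL B hA)⟩
  | _ => cases ht

theorem Typing.p2_inv {Γ : List Ty} {s : Tm} {A : Ty} (h : Typing Γ (Tm.p2 s) A) :
    ∃ B, Typing Γ s (Ty.conj B A) := by
  generalize ht : Tm.p2 s = t at h
  induction h with
  | p2 hs => cases ht; exact ⟨_, hs⟩
  | iso _ hA ih =>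
    obtain ⟨B, hs⟩ := ih ht
    exact ⟨B, hs.iso (Iso.conjR B hA)⟩
  | _ => cases ht

theorem generation_proj (Γ : List Ty) (s : Tm) (A : Ty) :
    (Typing Γ (Tm.p1 s) A → ∃ B₁ B₂, Typing Γ s (Ty.conj B₁ B₂) ∧ B₁ = A) ∧
    (Typing Γ (Tm.p2 s) A → ∃ B₁ B₂, Typing Γ s (Ty.conj B₁ B₂) ∧ B₂ = A) := by
  refine ⟨fun h => ?_, fun h => ?_⟩
  · obtain ⟨B, hs⟩ := h.p1_inv
    exact ⟨A, B, hs, rfl⟩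
  · obtain ⟨B, hs⟩ := h.p2_inv
    exact ⟨B, A, hs, rfl⟩
end

section
/- If A ∧ B ≡ C ∧ D, where ≡ is the congruence generated by the distributivity isomorphism, then A ≡ C and B ≡ D. -/
/-!
Push every arrow under the conjunctions of its codomain, i.e. orient distributivity from left to right.
Every type is ≡ to its normal form, and the normal form is invariant under each rule of the congruence,
so `A ≡ B` iff `A` and `B` have the same normal form. As the normal form of `A ∧ B` is the conjunction
of the normal forms of `A` and `B`, the theorem follows from injectivity of `∧`.
-/

namespace Ty

def distribArr (A : Ty) : Ty → Ty
  | conj B C => conj (distribArr A B) (distribArr A C)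
  | B => arr A B

def normalForm : Ty → Ty
  | base => base
  | arr A B => distribArr (normalForm A) (normalForm B)
  | conj A B => conj (normalForm A) (normalForm B)

end Ty

open Ty

namespace Iso

theorem arr_distribArr (A B : Ty) : Iso (arr A B) (distribArr A B) := by
  induction B with
  | base | arr => exact refl _
  | conj B C ihB ihC => exact (distr A B C).trans ((conjL _ ihB).trans (conjR _ ihC))

theorem self_normalForm (A : Ty) : Iso A (normalForm A) := by
  induction A with
  | base => exact refl _
  | arr A B ihA ihB =>
    exact ((arrL _ ihA).trans (arrR _ ihB)).trans (arr_distribArr _ _)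
  | conj A B ihA ihB => exact (conjL _ ihA).trans (conjR _ ihB)

theorem normalForm_eq {A B : Ty} (h : Iso A B) : normalForm A = normalForm B := by
  induction h with
  | refl | distr => rfl
  | symm _ ih => exact ih.symm
  | trans _ _ ih₁ ih₂ => exact ih₁.trans ih₂
  | arrL _ _ ih | arrR _ _ ih | conjL _ _ ih | conjR _ _ ih => simp only [normalForm, ih]

theorem iff_normalForm_eq {A B : Ty} : Iso A B ↔ normalForm A = normalForm B :=
  ⟨normalForm_eq, fun h => (self_normalForm A).trans (h ▸ (self_normalForm B).symm)⟩

end Iso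

theorem iso_conj_conj (A B C D : Ty) (h : Iso (Ty.conj A B) (Ty.conj C D)) :
    Iso A C ∧ Iso B D := by
  simpa only [Iso.iff_normalForm_eq, normalForm, conj.injEq] using h
end

section
/- If A ⇒ B ≡ C ⇒ D, where ≡ is the congruence generated by the distributivity isomorphism, then A ≡ C and B ≡ D. -/
/-! Distributing every arrow over the conjunctions in its codomain computes a normal form `Ty.nf`
that is invariant under each generating rule of `Iso`, so `Iso A B ↔ A.nf = B.nf`. The normal form
of `A ⇒ B` is `A.nf ⇒ B.nf` distributed, from which both `A.nf` and `B.nf` can be read off. -/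

namespace Ty

def arrDistrib (a : Ty) : Ty → Ty
| conj b c => conj (arrDistrib a b) (arrDistrib a c)
| b => arr a b

def nf : Ty → Ty
| base => base
| arr a b => arrDistrib a.nf b.nf
| conj a b => conj a.nf b.nf

theorem arrDistrib_inj {a b c d : Ty} (h : arrDistrib a b = arrDistrib c d) : a = c ∧ b = d := by
  induction b generalizing d with
  | conj b₁ b₂ ih₁ ih₂ =>
    cases d <;> simp only [arrDistrib, conj.injEq, reduceCtorEq] at h
    exact ⟨(ih₁ h.1).1, by rw [(ih₁ h.1).2, (ih₂ h.2).2]⟩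
  | _ => cases d <;> simp_all [arrDistrib]

theorem iso_arr_arrDistrib (a b : Ty) : Iso (arr a b) (arrDistrib a b) := by
  induction b with
  | conj b c ihb ihc => exact (Iso.distr a b c).trans ((Iso.conjL _ ihb).trans (Iso.conjR _ ihc))
  | _ => exact Iso.refl _

theorem iso_nf (a : Ty) : Iso a a.nf := by
  induction a with
  | base => exact Iso.refl _
  | arr a b iha ihb => exact ((Iso.arrL _ iha).trans (Iso.arrR _ ihb)).trans (iso_arr_arrDistrib _ _)
  | conj a b iha ihb => exact (Iso.conjL _ iha).trans (Iso.conjR _ ihb)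

end Ty

theorem Iso.nf_eq {a b : Ty} (h : Iso a b) : a.nf = b.nf := by
  induction h with
  | refl => rfl
  | symm _ ih => exact ih.symm
  | trans _ _ ih₁ ih₂ => exact ih₁.trans ih₂
  | distr => rfl
  | arrL _ _ ih | arrR _ _ ih | conjL _ _ ih | conjR _ _ ih => simp only [Ty.nf, ih]

theorem Ty.iso_iff_nf_eq {a b : Ty} : Iso a b ↔ a.nf = b.nf :=
  ⟨Iso.nf_eq, fun h => (iso_nf a).trans (h ▸ (iso_nf b).symm)⟩

theorem iso_arr_arr (A B C D : Ty) (h : Iso (Ty.arr A B) (Ty.arr C D)) :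
    Iso A C ∧ Iso B D := by
  obtain ⟨hAC, hBD⟩ := Ty.arrDistrib_inj h.nf_eq
  exact ⟨Ty.iso_iff_nf_eq.mpr hAC, Ty.iso_iff_nf_eq.mpr hBD⟩
end

section
/- If A ∧ B ≡ C ⇒ D, where ≡ is the congruence generated by the distributivity isomorphism, then there exist types D₁, D₂ with D ≡ D₁ ∧ D₂, A ≡ C ⇒ D₁, and B ≡ C ⇒ D₂. -/
/-! Distributing every arrow over conjunctions turns a type into a binary conjunction tree
whose leaves are not conjunctions. The congruence `≡` preserves the shape of this tree and relates
the leaves pairwise by `≡`. The tree of `C ⇒ D` is that of `D` with `C ⇒ ·` applied to every leaf,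
so matching it against the tree of `A ∧ B` splits the tree of `D` at its root into the two
components `D₁`, `D₂`. -/

inductive ConjTree (α : Type) : Type
| leaf : α → ConjTree α
| node : ConjTree α → ConjTree α → ConjTree α

namespace ConjTree

variable {α β γ δ : Type}

def map (f : α → β) : ConjTree α → ConjTree β
| leaf a => leaf (f a)
| node l r => node (l.map f) (r.map f)

inductive Forall₂ (R : α → β → Prop) : ConjTree α → ConjTree β → Prop
| leaf {a b} : R a b → Forall₂ R (leaf a) (leaf b)
| node {l l' r r'} : Forall₂ R l l' → Forall₂ R r r' → Forall₂ R (node l r) (node l' r')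

namespace Forall₂

variable {R : α → α → Prop}

theorem refl (hR : ∀ a, R a a) : ∀ t, Forall₂ R t t
| .leaf a => leaf (hR a)
| .node l r => node (refl hR l) (refl hR r)

theorem symm (hR : ∀ {a b}, R a b → R b a) {t t'} (h : Forall₂ R t t') : Forall₂ R t' t := by
  induction h with
  | leaf h => exact leaf (hR h)
  | node _ _ ihl ihr => exact node ihl ihr

theorem trans (hR : ∀ {a b c}, R a b → R b c → R a c) {t₁ t₂ t₃} (h : Forall₂ R t₁ t₂)
    (h' : Forall₂ R t₂ t₃) : Forall₂ R t₁ t₃ := by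
  induction h generalizing t₃ with
  | leaf h => cases h' with | leaf h' => exact leaf (hR h h')
  | node _ _ ihl ihr => cases h' with | node hl hr => exact node (ihl hl) (ihr hr)

end Forall₂

theorem Forall₂.imp_map {R : α → β → Prop} {S : γ → δ → Prop} {f : α → γ} {g : β → δ}
    (hRS : ∀ {a b}, R a b → S (f a) (g b)) {t t'} (h : Forall₂ R t t') :
    Forall₂ S (t.map f) (t'.map g) := by
  induction h with
  | leaf h => exact leaf (hRS h)
  | node _ _ ihl ihr => exact node ihl ihr

theorem exists_eq_node_of_forall₂_node_map {R : α → β → Prop} {f : γ → β} {l r : ConjTree α}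
    {t : ConjTree γ} (h : Forall₂ R (node l r) (t.map f)) :
    ∃ t₁ t₂, t = node t₁ t₂ ∧ Forall₂ R l (t₁.map f) ∧ Forall₂ R r (t₂.map f) := by
  cases t with
  | leaf => cases h
  | node t₁ t₂ => cases h with | node hl hr => exact ⟨t₁, t₂, rfl, hl, hr⟩

def toTy : ConjTree Ty → Ty
| leaf A => A
| node l r => Ty.conj l.toTy r.toTy

end ConjTree

open ConjTree

def Ty.factors : Ty → ConjTree Ty
| Ty.base => leaf Ty.base
| Ty.conj A B => node A.factors B.factors
| Ty.arr A B => B.factors.map (Ty.arr A)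

namespace Iso

theorem arr_toTy (A : Ty) : ∀ t : ConjTree Ty, Iso (Ty.arr A t.toTy) (t.map (Ty.arr A)).toTy
| leaf _ => refl _
| node l r =>
    (distr A l.toTy r.toTy).trans ((conjL _ (arr_toTy A l)).trans (conjR _ (arr_toTy A r)))

theorem toTy_factors : ∀ A : Ty, Iso A A.factors.toTy
| Ty.base => refl _
| Ty.conj A B => (conjL _ (toTy_factors A)).trans (conjR _ (toTy_factors B))
| Ty.arr A B => (arrR A (toTy_factors B)).trans (arr_toTy A B.factors)

theorem toTy_of_forall₂ {t t' : ConjTree Ty} (h : Forall₂ Iso t t') : Iso t.toTy t'.toTy := by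
  induction h with
  | leaf h => exact h
  | node _ _ ihl ihr => exact (conjL _ ihl).trans (conjR _ ihr)

theorem forall₂_factors {A B : Ty} (h : Iso A B) : Forall₂ Iso A.factors B.factors := by
  induction h with
  | refl A => exact Forall₂.refl refl _
  | symm _ ih => exact ih.symm symm
  | trans _ _ ih ih' => exact ih.trans (fun h₁ h₂ => h₁.trans h₂) ih'
  | distr => exact Forall₂.refl refl _
  | arrL B h _ =>
    exact (Forall₂.refl refl B.factors).imp_map fun h' => (arrL _ h).trans (arrR _ h')
  | arrR A _ ih => exact ih.imp_map fun h' => arrR A h'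
  | conjL B _ ih => exact .node ih (Forall₂.refl refl _)
  | conjR A _ ih => exact .node (Forall₂.refl refl _) ih

theorem arr_of_forall₂_factors {A C : Ty} {t : ConjTree Ty}
    (h : Forall₂ Iso A.factors (t.map (Ty.arr C))) : Iso A (Ty.arr C t.toTy) :=
  (toTy_factors A).trans ((toTy_of_forall₂ h).trans (arr_toTy C t).symm)

end Iso

theorem iso_conj_arr (A B C D : Ty) (h : Iso (Ty.conj A B) (Ty.arr C D)) :
    ∃ D₁ D₂, Iso D (Ty.conj D₁ D₂) ∧ Iso A (Ty.arr C D₁) ∧ Iso B (Ty.arr C D₂) := by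
  obtain ⟨d₁, d₂, hD, hA, hB⟩ := exists_eq_node_of_forall₂_node_map (Iso.forall₂_factors h)
  refine ⟨d₁.toTy, d₂.toTy, ?_, Iso.arr_of_forall₂_factors hA, Iso.arr_of_forall₂_factors hB⟩
  simpa only [hD, toTy] using Iso.toTy_factors D
end

section
/- CR1: for every simple type A, the reducibility interpretation ⟦A⟧ is contained in the set SN of strongly normalizing terms of the distributive λ-calculus. -/
/-!
Girard's reducibility candidates: a set of terms is a candidate when it contains only strongly
normalizing terms, is closed under reduction, and contains every neutral term all of whose
one-step reducts it contains. `SN` is a candidate and candidates are closed under the arrow and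
conjunction constructions, so every `Red A` is one. For the arrow, CR1 uses that variables
(neutral and normal) are in every candidate; CR3 proceeds by induction on the strong
normalization of the argument, the neutrality of the function ruling out head redexes.
-/

namespace Tm

theorem SN.of_map {f : Tm → Tm} (hf : ∀ {t t'}, Step t t' → Step (f t) (f t')) {t : Tm}
    (h : SN (f t)) : SN t :=
  Subrelation.accessible (fun hs => hf hs) (InvImage.accessible f h)

theorem SN.of_app_left {t s : Tm} (h : SN (app t s)) : SN t :=
  SN.of_map (f := (app · s)) Step.appL h

theorem SN.of_p1 {t : Tm} (h : SN (p1 t)) : SN t :=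
  SN.of_map Step.p1_cong h

theorem Normal.var (n : ℕ) : Normal (var n) := fun ⟨_, h⟩ => nomatch h

end Tm

open Tm

structure IsCandidate (P : Tm → Prop) : Prop where
  sn : ∀ {t}, P t → SN t
  step : ∀ {t t'}, P t → Step t t' → P t'
  neutral : ∀ {t}, Neutral t → (∀ t', Step t t' → P t') → P t

theorem isCandidate_sn : IsCandidate SN where
  sn h := h
  step h hs := h.inv hs
  neutral _ h := Acc.intro _ h

namespace IsCandidate

variable {P Q : Tm → Prop}

theorem var (hP : IsCandidate P) (n : ℕ) : P (var n) :=
  hP.neutral trivial fun _ h => absurd ⟨_, h⟩ (Normal.var n)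

theorem arr (hP : IsCandidate P) (hQ : IsCandidate Q) :
    IsCandidate fun t => ∀ s, P s → Q (app t s) where
  sn h := (hQ.sn (h _ (hP.var 0))).of_app_left
  step h hs s hs' := hQ.step (h s hs') (Step.appL hs)
  neutral {t} hneut hred s hs := by
    induction hP.sn hs with
    | intro s _ ih =>
      refine hQ.neutral trivial fun u hu => ?_
      cases hu with
      | beta | pairApp => exact hneut.elim
      | appL ht => exact hred _ ht s hs
      | appR hs' => exact ih _ hs' (hP.step hs hs')

theorem conj (hP : IsCandidate P) (hQ : IsCandidate Q) :
    IsCandidate fun t => P (p1 t) ∧ Q (p2 t) where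
  sn h := (hP.sn h.1).of_p1
  step h hs := ⟨hP.step h.1 (Step.p1_cong hs), hQ.step h.2 (Step.p2_cong hs)⟩
  neutral hneut hred := by
    constructor
    · refine hP.neutral trivial fun u hu => ?_
      cases hu with
      | proj1 | projLam1 => exact hneut.elim
      | p1_cong ht => exact (hred _ ht).1
    · refine hQ.neutral trivial fun u hu => ?_
      cases hu with
      | proj2 | projLam2 => exact hneut.elim
      | p2_cong ht => exact (hred _ ht).2

end IsCandidate

theorem isCandidate_red : ∀ A : Ty, IsCandidate (Red A)
  | .base => isCandidate_sn
  | .arr A B => (isCandidate_red A).arr (isCandidate_red B)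
  | .conj A B => (isCandidate_red A).conj (isCandidate_red B)

theorem cr1 (A : Ty) (t : Tm) (h : Red A t) : Tm.SN t := (isCandidate_red A).sn h
end
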